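/- arXiv:2108.03059 — 2 statements merged into one kernel-verified Lean document; each statement's English description precedes it below -/
import Mathlib

section
/- Let A₁ and A₂ be two disjoint solvable subsets of V(G). Then: (i) if A₁ and A₂ are both AO or both NO, then A₁ is x̄_{A₂}-NO if and only if A₂ is x̄_{A₁}-NO; (ii) if A₁ is AO and A₂ is NO, then A₁ is x̄_{A₂}-NO if and only if A₂ is x̄_{A₁}-AO. -/
open Matrix
open scoped Classical

/-- The closed neighborhood matrix of a simple graph over `ℤ₂`:
`N(G) u v = 1` iff `u = v` or `u` is adjacent to `v`. -/
noncomputable def nbhdMatrix {V : Type*} [Fintype V] (G : SimpleGraph V) :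
    Matrix V V (ZMod 2) :=
  Matrix.of fun u v => if u = v ∨ G.Adj u v then 1 else 0

/-- The nullity of a matrix over `ℤ₂`: the dimension of its kernel. -/
noncomputable def nullityM {V : Type*} [Fintype V] (M : Matrix V V (ZMod 2)) : ℕ :=
  Module.finrank (ZMod 2) (LinearMap.ker M.mulVecLin)

/-- The nullity `ν(G)` of a graph. -/
noncomputable def graphNullity {V : Type*} [Fintype V] (G : SimpleGraph V) : ℕ :=
  nullityM (nbhdMatrix G)

/-- Characteristic vector of a set of vertices. -/
noncomputable def chi {V : Type*} (A : Set V) : V → ZMod 2 :=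
  fun v => if v ∈ A then 1 else 0

/-- A configuration `c` is solvable (w.r.t. the matrix `M`) if `M p = c` for some pattern `p`. -/
def Solv {V : Type*} [Fintype V] (M : Matrix V V (ZMod 2)) (c : V → ZMod 2) : Prop :=
  ∃ p : V → ZMod 2, M.mulVec p = c

/-- `A` is `c`-always odd activated: `A` is solvable and `x_A · p = 1` for every solving
pattern `p` for `c`. -/
def cAO {V : Type*} [Fintype V] (M : Matrix V V (ZMod 2)) (c : V → ZMod 2)
    (A : Set V) : Prop :=
  Solv M (chi A) ∧ ∀ p : V → ZMod 2, M.mulVec p = c → chi A ⬝ᵥ p = 1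

/-- `A` is `c`-never odd activated: `A` is solvable and `x_A · p = 0` for every solving
pattern `p` for `c`. -/
def cNO {V : Type*} [Fintype V] (M : Matrix V V (ZMod 2)) (c : V → ZMod 2)
    (A : Set V) : Prop :=
  Solv M (chi A) ∧ ∀ p : V → ZMod 2, M.mulVec p = c → chi A ⬝ᵥ p = 0

/-- `A` is always odd activated (AO): `𝟏`-always odd activated. -/
def AO {V : Type*} [Fintype V] (M : Matrix V V (ZMod 2)) (A : Set V) : Prop :=
  cAO M 1 A

/-- `A` is never odd activated (NO): `𝟏`-never odd activated. -/
def NO {V : Type*} [Fintype V] (M : Matrix V V (ZMod 2)) (A : Set V) : Prop :=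
  cNO M 1 A

/-- `A` is half odd activated (HO): `x_A` is not solvable. -/
def HO {V : Type*} [Fintype V] (M : Matrix V V (ZMod 2)) (A : Set V) : Prop :=
  ¬ Solv M (chi A)


lemma nbhd_symm {V : Type*} [Fintype V] (G : SimpleGraph V) :
    (nbhdMatrix G)ᵀ = nbhdMatrix G := by
  ext u v
  simp only [nbhdMatrix, Matrix.transpose_apply, Matrix.of_apply]
  exact if_congr (or_congr eq_comm (G.adj_comm v u)) rfl rfl

lemma key_symm {V : Type*} [Fintype V] (M : Matrix V V (ZMod 2)) (hM : Mᵀ = M)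
    (x y : V → ZMod 2) : M.mulVec x ⬝ᵥ y = x ⬝ᵥ M.mulVec y := by
  rw [Matrix.dotProduct_mulVec, ← Matrix.mulVec_transpose, hM]

/-- Lemma 8 of the paper: for disjoint solvable sets `A₁`, `A₂`:
(i) if both are AO or both are NO, then `A₁` is `x̄_{A₂}`-NO iff `A₂` is `x̄_{A₁}`-NO;
(ii) if `A₁` is AO and `A₂` is NO, then `A₁` is `x̄_{A₂}`-NO iff `A₂` is `x̄_{A₁}`-AO. -/
theorem stmt10 {V : Type*} [Fintype V] (G : SimpleGraph V) (A₁ A₂ : Set V)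
    (hd : Disjoint A₁ A₂)
    (h1 : Solv (nbhdMatrix G) (chi A₁)) (h2 : Solv (nbhdMatrix G) (chi A₂)) :
    (((AO (nbhdMatrix G) A₁ ∧ AO (nbhdMatrix G) A₂) ∨
      (NO (nbhdMatrix G) A₁ ∧ NO (nbhdMatrix G) A₂)) →
      (cNO (nbhdMatrix G) (chi A₂ + 1) A₁ ↔ cNO (nbhdMatrix G) (chi A₁ + 1) A₂)) ∧
    ((AO (nbhdMatrix G) A₁ ∧ NO (nbhdMatrix G) A₂) →
      (cNO (nbhdMatrix G) (chi A₂ + 1) A₁ ↔ cAO (nbhdMatrix G) (chi A₁ + 1) A₂)) := by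
  set M := nbhdMatrix G with hMdef
  have hM : Mᵀ = M := nbhd_symm G
  have hkey : ∀ x y, M.mulVec x ⬝ᵥ y = x ⬝ᵥ M.mulVec y := key_symm M hM
  obtain ⟨p₁, hp₁⟩ := h1
  obtain ⟨p₂, hp₂⟩ := h2
  by_cases hone : Solv M 1
  · obtain ⟨d, hd⟩ := hone
    have hc2solv : M.mulVec (p₂ + d) = chi A₂ + 1 := by
      rw [Matrix.mulVec_add, hp₂, hd]
    have hc1solv : M.mulVec (p₁ + d) = chi A₁ + 1 := by
      rw [Matrix.mulVec_add, hp₁, hd]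
    have h1val : ∀ p, M.mulVec p = chi A₂ + 1 →
        chi A₁ ⬝ᵥ p = p₁ ⬝ᵥ chi A₂ + p₁ ⬝ᵥ 1 := by
      intro p hp
      rw [← hp₁, hkey, hp, dotProduct_add]
    have h2val : ∀ p, M.mulVec p = chi A₁ + 1 →
        chi A₂ ⬝ᵥ p = p₂ ⬝ᵥ chi A₁ + p₂ ⬝ᵥ 1 := by
      intro p hp
      rw [← hp₂, hkey, hp, dotProduct_add]
    have hcross : p₁ ⬝ᵥ chi A₂ = p₂ ⬝ᵥ chi A₁ := by
      calc p₁ ⬝ᵥ chi A₂ = p₁ ⬝ᵥ M.mulVec p₂ := by rw [hp₂]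
        _ = M.mulVec p₁ ⬝ᵥ p₂ := (hkey p₁ p₂).symm
        _ = chi A₁ ⬝ᵥ p₂ := by rw [hp₁]
        _ = p₂ ⬝ᵥ chi A₁ := dotProduct_comm _ _
    have e1 : cNO M (chi A₂ + 1) A₁ ↔ p₂ ⬝ᵥ chi A₁ + p₁ ⬝ᵥ 1 = 0 := by
      rw [← hcross]
      constructor
      · rintro ⟨-, h⟩
        rw [← h1val _ hc2solv]
        exact h _ hc2solv
      · intro h
        exact ⟨⟨p₁, hp₁⟩, fun p hp => (h1val p hp).trans h⟩
    have e2 : cNO M (chi A₁ + 1) A₂ ↔ p₂ ⬝ᵥ chi A₁ + p₂ ⬝ᵥ 1 = 0 := by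
      constructor
      · rintro ⟨-, h⟩
        rw [← h2val _ hc1solv]
        exact h _ hc1solv
      · intro h
        exact ⟨⟨p₂, hp₂⟩, fun p hp => (h2val p hp).trans h⟩
    have e2' : cAO M (chi A₁ + 1) A₂ ↔ p₂ ⬝ᵥ chi A₁ + p₂ ⬝ᵥ 1 = 1 := by
      constructor
      · rintro ⟨-, h⟩
        rw [← h2val _ hc1solv]
        exact h _ hc1solv
      · intro h
        exact ⟨⟨p₂, hp₂⟩, fun p hp => (h2val p hp).trans h⟩
    have hb1 : p₁ ⬝ᵥ (1 : V → ZMod 2) = chi A₁ ⬝ᵥ d := by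
      rw [← hd, ← hkey, hp₁]
    have hb2 : p₂ ⬝ᵥ (1 : V → ZMod 2) = chi A₂ ⬝ᵥ d := by
      rw [← hd, ← hkey, hp₂]
    constructor
    · rintro (⟨hA1, hA2⟩ | ⟨hA1, hA2⟩)
      · rw [e1, e2, hb1, hb2, hA1.2 d hd, hA2.2 d hd]
      · rw [e1, e2, hb1, hb2, hA1.2 d hd, hA2.2 d hd]
    · rintro ⟨hA1, hA2⟩
      rw [e1, e2', hb1, hb2, hA1.2 d hd, hA2.2 d hd]
      generalize p₂ ⬝ᵥ chi A₁ = a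
      revert a
      decide
  · have hns2 : ∀ p, M.mulVec p ≠ chi A₂ + 1 := by
      intro p hp
      refine hone ⟨p + p₂, ?_⟩
      rw [Matrix.mulVec_add, hp, hp₂]
      funext v
      have : ∀ x : ZMod 2, x + 1 + x = 1 := by decide
      simpa using this (chi A₂ v)
    have hns1 : ∀ p, M.mulVec p ≠ chi A₁ + 1 := by
      intro p hp
      refine hone ⟨p + p₁, ?_⟩
      rw [Matrix.mulVec_add, hp, hp₁]
      funext v
      have : ∀ x : ZMod 2, x + 1 + x = 1 := by decide
      simpa using this (chi A₁ v)
    constructor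
    · intro _
      constructor
      · intro _
        exact ⟨⟨p₂, hp₂⟩, fun p hp => absurd hp (hns1 p)⟩
      · intro _
        exact ⟨⟨p₁, hp₁⟩, fun p hp => absurd hp (hns2 p)⟩
    · intro _
      constructor
      · intro _
        exact ⟨⟨p₂, hp₂⟩, fun p hp => absurd hp (hns1 p)⟩
      · intro _
        exact ⟨⟨p₁, hp₁⟩, fun p hp => absurd hp (hns2 p)⟩
end

section
/- Let A₁ and A₂ be disjoint NO sets in G, and suppose A₂ is x̄_{A₁}-AO in G. Then for any pattern p, N(G*)p = 𝟏 if and only if N(G)p = 𝟏 or N(G)p = x̄_{A₁} or N(G)p = x̄_{A₂} or N(G)p = x̄_{A₁∪A₂}. Moreover, A₁ and A₂ are HO in G*, and ν(G*) = ν(G) + 2. -/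
open Matrix
open scoped Classical

/-- The closed neighborhood matrix of the graph `G*` obtained from `G` by toggling every
pair of vertices between the disjoint sets `A₁` and `A₂`:
`N(G*) = N(G) + x_{A₁} x_{A₂}ᵗ + x_{A₂} x_{A₁}ᵗ` over `ℤ₂`. -/
noncomputable def starMatrix {V : Type*} [Fintype V] (G : SimpleGraph V)
    (A₁ A₂ : Set V) : Matrix V V (ZMod 2) :=
  nbhdMatrix G + Matrix.vecMulVec (chi A₁) (chi A₂) + Matrix.vecMulVec (chi A₂) (chi A₁)

/-!
Write `N = N(G)` and choose `q₁, q₂` with `N q₁ = x_{A₁}`, `N q₂ = x_{A₂}`. Over `ℤ₂` a symmetric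
matrix with unit diagonal satisfies `x · N x = x · 𝟏`, so the kernel of `N` is orthogonal to `𝟏`
and `𝟏` is solvable (Sutner). With a solution `p₀` of `N p₀ = 𝟏` and the symmetry of `N`, the NO
and AO hypotheses say exactly that `q₁, q₂` is a hyperbolic pair for `(x, y) ↦ x · N y`:
`q₁ · N q₁ = q₂ · N q₂ = 0` and `q₁ · N q₂ = 1`.

For `N* = N + x_{A₁} x_{A₂}ᵗ + x_{A₂} x_{A₁}ᵗ` the dot products `x_{Aᵢ} · p = qᵢ · N p` then show
that `N* p = c` forces `q₁ · c = q₂ · c = 0` (so `x_{A₁}`, `x_{A₂}` are not solvable in `G*`),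
that for such `c` the solutions of `N* p = c` are those of `N p = c + a x_{A₁} + b x_{A₂}`, and
that `p ↦ (x_{A₁} · p, x_{A₂} · p)` maps `ker N*` onto `ℤ₂²` with kernel `ker N`.
-/

namespace Matrix

theorem exists_mulVec_eq_of_forall_vecMul_eq_zero {K m n : Type*} [Field K] [Fintype m]
    [Fintype n] {M : Matrix m n K} {c : m → K} (h : ∀ y, y ᵥ* M = 0 → y ⬝ᵥ c = 0) :
    ∃ p, M *ᵥ p = c := by
  classical
  by_contra hc
  obtain ⟨f, hfc, hf⟩ := Submodule.exists_dual_map_eq_bot_of_notMem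
    (p := LinearMap.range M.mulVecLin) (fun ⟨p, hp⟩ => hc ⟨p, hp⟩) inferInstance
  set y := (dotProductEquiv K m).symm f
  have hfy : ∀ x, f x = y ⬝ᵥ x := fun x => by
    rw [← dotProductEquiv_apply_apply, LinearEquiv.apply_symm_apply]
  have hyM : y ᵥ* M = 0 := dotProduct_eq_zero _ fun w => by
    rw [← dotProduct_mulVec, ← hfy, ← Submodule.mem_bot K, ← hf]
    exact Submodule.mem_map_of_mem ⟨w, rfl⟩
  exact hfc (by rw [hfy]; exact h y hyM)

theorem dotProduct_mulVec_self_of_isSymm {R n : Type*} [CommRing R] [CharP R 2] [Fintype n]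
    {M : Matrix n n R} (hM : M.IsSymm) (x : n → R) :
    x ⬝ᵥ M *ᵥ x = ∑ i, M i i * (x i * x i) := by
  classical
  have hoff : ∑ ij ∈ Finset.univ.offDiag, x ij.1 * M ij.1 ij.2 * x ij.2 = 0 := by
    refine Finset.sum_involution (fun ij _ => ij.swap) (fun ij _ => ?_) (fun ij hij _ h => ?_)
      (fun ij hij => by simpa [and_comm, eq_comm] using hij) (fun _ _ => rfl)
    · rw [Prod.fst_swap, Prod.snd_swap, hM.apply ij.1 ij.2,
        show x ij.2 * M ij.1 ij.2 * x ij.1 = x ij.1 * M ij.1 ij.2 * x ij.2 by ring,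
        CharTwo.add_self_eq_zero]
    · exact (Finset.mem_offDiag.1 hij).2.2 (congrArg Prod.fst h).symm
  rw [dot_mulVec_eq_sum_sum, Finset.sum_comm, ← Finset.sum_product',
    ← Finset.diag_union_offDiag, Finset.sum_union (Finset.disjoint_diag_offDiag _),
    Finset.sum_diag, hoff, add_zero]
  exact Finset.sum_congr rfl fun i _ => by ring

/-- For `M = N(G)`, `u = x_{A₁}`, `v = x_{A₂}` this is the neighbourhood matrix of `G*`. -/
def toggle {R n : Type*} [Add R] [Mul R] (M : Matrix n n R) (u v : n → R) : Matrix n n R :=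
  M + vecMulVec u v + vecMulVec v u

section CommSemiring

variable {R n : Type*} [CommSemiring R] [Fintype n] {M : Matrix n n R}

theorem IsSymm.dotProduct_mulVec_comm (hM : M.IsSymm) (x y : n → R) :
    x ⬝ᵥ M *ᵥ y = y ⬝ᵥ M *ᵥ x := by
  rw [dotProduct_mulVec, ← mulVec_transpose, hM.eq, dotProduct_comm]

theorem IsSymm.mulVec_dotProduct (hM : M.IsSymm) (x y : n → R) : M *ᵥ x ⬝ᵥ y = x ⬝ᵥ M *ᵥ y := by
  rw [dotProduct_comm, hM.dotProduct_mulVec_comm]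

theorem toggle_mulVec (M : Matrix n n R) (u v p : n → R) :
    toggle M u v *ᵥ p = M *ᵥ p + (v ⬝ᵥ p) • u + (u ⬝ᵥ p) • v := by
  simp only [toggle, add_mulVec, vecMulVec_mulVec, op_smul_eq_smul]

structure IsHyperbolicPair (M : Matrix n n R) (q₁ q₂ : n → R) : Prop where
  left : q₁ ⬝ᵥ M *ᵥ q₁ = 0
  right : q₂ ⬝ᵥ M *ᵥ q₂ = 0
  cross : q₁ ⬝ᵥ M *ᵥ q₂ = 1

theorem IsHyperbolicPair.cross_symm {q₁ q₂ : n → R} (h : IsHyperbolicPair M q₁ q₂)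
    (hM : M.IsSymm) : q₂ ⬝ᵥ M *ᵥ q₁ = 1 := by
  rw [hM.dotProduct_mulVec_comm, h.cross]

end CommSemiring

section CharTwo

variable {K n : Type*} [Field K] [CharP K 2] [Fintype n] {M : Matrix n n K} {q₁ q₂ : n → K}

theorem mulVec_eq_of_toggle_mulVec_eq {u v p c : n → K} (hp : toggle M u v *ᵥ p = c) :
    M *ᵥ p = c + (v ⬝ᵥ p) • u + (u ⬝ᵥ p) • v := by
  rw [← hp, toggle_mulVec]
  ext i
  simp only [Pi.add_apply, Pi.smul_apply, smul_eq_mul]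
  linear_combination (-(v ⬝ᵥ p) * u i - (u ⬝ᵥ p) * v i) * CharTwo.two_eq_zero (R := K)

theorem toggle_mulVec_of_mulVec_eq (hM : M.IsSymm) (h : IsHyperbolicPair M q₁ q₂)
    {p c : n → K} {a b : K} (hp : M *ᵥ p = c + a • M *ᵥ q₁ + b • M *ᵥ q₂) :
    toggle M (M *ᵥ q₁) (M *ᵥ q₂) *ᵥ p = c + (q₂ ⬝ᵥ c) • M *ᵥ q₁ + (q₁ ⬝ᵥ c) • M *ᵥ q₂ := by
  have h₁ : M *ᵥ q₁ ⬝ᵥ p = q₁ ⬝ᵥ c + b := by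
    rw [hM.mulVec_dotProduct, hp, dotProduct_add, dotProduct_add, dotProduct_smul,
      dotProduct_smul, h.left, h.cross, smul_zero, add_zero, smul_eq_mul, mul_one]
  have h₂ : M *ᵥ q₂ ⬝ᵥ p = q₂ ⬝ᵥ c + a := by
    rw [hM.mulVec_dotProduct, hp, dotProduct_add, dotProduct_add, dotProduct_smul,
      dotProduct_smul, h.cross_symm hM, h.right, smul_zero, add_zero,
      smul_eq_mul, mul_one]
  rw [toggle_mulVec, h₁, h₂, hp]
  ext i
  simp only [Pi.add_apply, Pi.smul_apply, smul_eq_mul]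
  linear_combination (a * (M *ᵥ q₁) i + b * (M *ᵥ q₂) i) * CharTwo.two_eq_zero (R := K)

theorem dotProduct_eq_zero_of_toggle_mulVec_eq (hM : M.IsSymm) (h : IsHyperbolicPair M q₁ q₂)
    {p c : n → K} (hp : toggle M (M *ᵥ q₁) (M *ᵥ q₂) *ᵥ p = c) :
    q₁ ⬝ᵥ c = 0 ∧ q₂ ⬝ᵥ c = 0 := by
  have hMp := mulVec_eq_of_toggle_mulVec_eq hp
  constructor
  · have := congrArg (q₁ ⬝ᵥ ·) hMp
    simp only [dotProduct_add, dotProduct_smul, h.left, h.cross, smul_eq_mul, mul_zero, add_zero,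
      mul_one, ← hM.mulVec_dotProduct] at this
    exact add_eq_right.1 this.symm
  · have := congrArg (q₂ ⬝ᵥ ·) hMp
    simp only [dotProduct_add, dotProduct_smul, h.right, h.cross_symm hM,
      smul_eq_mul, mul_zero, add_zero, mul_one, ← hM.mulVec_dotProduct] at this
    exact add_eq_right.1 this.symm

theorem toggle_mulVec_eq_iff (hM : M.IsSymm) (h : IsHyperbolicPair M q₁ q₂) {p c : n → K}
    (hc₁ : q₁ ⬝ᵥ c = 0) (hc₂ : q₂ ⬝ᵥ c = 0) :
    toggle M (M *ᵥ q₁) (M *ᵥ q₂) *ᵥ p = c ↔ ∃ a b : K, M *ᵥ p = c + a • M *ᵥ q₁ + b • M *ᵥ q₂ :=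
  ⟨fun hp => ⟨_, _, mulVec_eq_of_toggle_mulVec_eq hp⟩, fun ⟨_, _, hp⟩ => by
    rw [toggle_mulVec_of_mulVec_eq hM h hp, hc₁, hc₂, zero_smul, zero_smul, add_zero, add_zero]⟩

theorem not_exists_toggle_mulVec_eq_left (hM : M.IsSymm) (h : IsHyperbolicPair M q₁ q₂) :
    ¬ ∃ p, toggle M (M *ᵥ q₁) (M *ᵥ q₂) *ᵥ p = M *ᵥ q₁ := fun ⟨_, hp⟩ => by
  simpa [h.cross_symm hM] using (dotProduct_eq_zero_of_toggle_mulVec_eq hM h hp).2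

theorem not_exists_toggle_mulVec_eq_right (hM : M.IsSymm) (h : IsHyperbolicPair M q₁ q₂) :
    ¬ ∃ p, toggle M (M *ᵥ q₁) (M *ᵥ q₂) *ᵥ p = M *ᵥ q₂ := fun ⟨_, hp⟩ => by
  simpa [h.cross] using (dotProduct_eq_zero_of_toggle_mulVec_eq hM h hp).1

theorem toggle_mulVec_eq_zero (hM : M.IsSymm) (h : IsHyperbolicPair M q₁ q₂) {x : n → K}
    {a b : K} (hx : M *ᵥ x = a • M *ᵥ q₁ + b • M *ᵥ q₂) :
    toggle M (M *ᵥ q₁) (M *ᵥ q₂) *ᵥ x = 0 := by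
  simpa using toggle_mulVec_of_mulVec_eq (c := 0) hM h (by rwa [zero_add])

theorem finrank_ker_toggle (hM : M.IsSymm) (h : IsHyperbolicPair M q₁ q₂) :
    Module.finrank K (LinearMap.ker (toggle M (M *ᵥ q₁) (M *ᵥ q₂)).mulVecLin) =
      Module.finrank K (LinearMap.ker M.mulVecLin) + 2 := by
  set T := toggle M (M *ᵥ q₁) (M *ᵥ q₂)
  have hle : LinearMap.ker M.mulVecLin ≤ LinearMap.ker T.mulVecLin := fun x hx =>
    toggle_mulVec_eq_zero hM h (a := 0) (b := 0) (by simpa using hx)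
  let φ : LinearMap.ker T.mulVecLin →ₗ[K] Fin 2 → K :=
    (of ![M *ᵥ q₁, M *ᵥ q₂]).mulVecLin ∘ₗ (LinearMap.ker T.mulVecLin).subtype
  have hφ : ∀ x, φ x = ![M *ᵥ q₁ ⬝ᵥ x, M *ᵥ q₂ ⬝ᵥ x] := fun x => by
    ext i; fin_cases i <;> rfl
  have hrange : LinearMap.range φ = ⊤ := by
    refine eq_top_iff.2 fun w _ => ⟨⟨w 0 • q₂ + w 1 • q₁, ?_⟩, ?_⟩
    · exact toggle_mulVec_eq_zero hM h (a := w 1) (b := w 0)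
        (by rw [mulVec_add, mulVec_smul, mulVec_smul, add_comm])
    · ext i
      fin_cases i <;>
        simp [hφ, hM.mulVec_dotProduct, mulVec_add, mulVec_smul, h.left, h.right, h.cross,
          h.cross_symm hM]
  have hker : LinearMap.ker φ =
      (LinearMap.ker M.mulVecLin).comap (LinearMap.ker T.mulVecLin).subtype := by
    ext ⟨x, hx⟩
    simp only [LinearMap.mem_ker, hφ, Submodule.mem_comap, Submodule.coe_subtype, mulVecLin_apply]
    constructor
    · intro h0
      have h₁ : M *ᵥ q₁ ⬝ᵥ x = 0 := congrFun h0 0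
      have h₂ : M *ᵥ q₂ ⬝ᵥ x = 0 := congrFun h0 1
      simpa [h₁, h₂] using mulVec_eq_of_toggle_mulVec_eq hx
    · intro hMx
      ext i
      fin_cases i <;> simp [hM.mulVec_dotProduct, hMx]
  have := φ.finrank_range_add_finrank_ker
  rw [hrange, finrank_top, Module.finrank_fin_fun, hker,
    (Submodule.comapSubtypeEquivOfLe hle).finrank_eq] at this
  omega

end CharTwo

end Matrix

theorem ZMod.exists_two {P : ZMod 2 → Prop} : (∃ a, P a) ↔ P 0 ∨ P 1 := Fin.exists_fin_two

theorem chi_union_of_disjoint {V : Type*} {A₁ A₂ : Set V} (hd : Disjoint A₁ A₂) :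
    chi (A₁ ∪ A₂) = chi A₁ + chi A₂ := by
  ext v
  by_cases h₁ : v ∈ A₁
  · simp [chi, h₁, Set.disjoint_left.1 hd h₁]
  · by_cases h₂ : v ∈ A₂ <;> simp [chi, h₁, h₂]

section Graph

variable {V : Type*} [Fintype V] (G : SimpleGraph V)

theorem nbhdMatrix_isSymm : (nbhdMatrix G).IsSymm := by
  ext u v
  simp only [nbhdMatrix, transpose_apply, of_apply, eq_comm, G.adj_comm]

theorem dotProduct_nbhdMatrix_mulVec_self (x : V → ZMod 2) :
    x ⬝ᵥ nbhdMatrix G *ᵥ x = x ⬝ᵥ 1 := by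
  rw [dotProduct_mulVec_self_of_isSymm (nbhdMatrix_isSymm G)]
  simp [dotProduct, nbhdMatrix, ← sq, ZMod.pow_card]

theorem exists_nbhdMatrix_mulVec_eq_one : ∃ p, nbhdMatrix G *ᵥ p = 1 :=
  exists_mulVec_eq_of_forall_vecMul_eq_zero fun y hy => by
    rw [← dotProduct_nbhdMatrix_mulVec_self, ← vecMul_transpose, (nbhdMatrix_isSymm G).eq, hy,
      dotProduct_zero]

theorem isHyperbolicPair_of_NO {A₁ A₂ : Set V} {q₁ q₂ : V → ZMod 2}
    (hq₁ : nbhdMatrix G *ᵥ q₁ = chi A₁) (hq₂ : nbhdMatrix G *ᵥ q₂ = chi A₂)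
    (h1 : NO (nbhdMatrix G) A₁) (h2 : NO (nbhdMatrix G) A₂)
    (h3 : cAO (nbhdMatrix G) (chi A₁ + 1) A₂) : IsHyperbolicPair (nbhdMatrix G) q₁ q₂ := by
  obtain ⟨p₀, hp₀⟩ := exists_nbhdMatrix_mulVec_eq_one G
  have hself : ∀ {q A}, nbhdMatrix G *ᵥ q = chi A → NO (nbhdMatrix G) A →
      q ⬝ᵥ nbhdMatrix G *ᵥ q = 0 := fun hq hA => by
    rw [dotProduct_nbhdMatrix_mulVec_self, ← hp₀, (nbhdMatrix_isSymm G).dotProduct_mulVec_comm,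
      hq, dotProduct_comm, hA.2 p₀ hp₀]
  refine ⟨hself hq₁ h1, hself hq₂ h2, ?_⟩
  have h := h3.2 (p₀ + q₁) (by rw [mulVec_add, hp₀, hq₁, add_comm])
  rw [dotProduct_add, h2.2 p₀ hp₀, zero_add] at h
  rw [hq₂, dotProduct_comm, h]

end Graph

/-- Proposition (NO, NO, `x̄_{A₁}`-AO): the odd dominating patterns of `G*` are exactly
the solving patterns of `𝟏`, `x̄_{A₁}`, `x̄_{A₂}`, `x̄_{A₁∪A₂}` in `G`; `A₁`, `A₂` become
HO in `G*`, and `ν(G*) = ν(G) + 2`. -/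
theorem stmt11 {V : Type*} [Fintype V] (G : SimpleGraph V) (A₁ A₂ : Set V)
    (hd : Disjoint A₁ A₂)
    (h1 : NO (nbhdMatrix G) A₁) (h2 : NO (nbhdMatrix G) A₂)
    (h3 : cAO (nbhdMatrix G) (chi A₁ + 1) A₂) :
    (∀ p : V → ZMod 2, (starMatrix G A₁ A₂).mulVec p = 1 ↔
      ((nbhdMatrix G).mulVec p = 1 ∨ (nbhdMatrix G).mulVec p = chi A₁ + 1 ∨
       (nbhdMatrix G).mulVec p = chi A₂ + 1 ∨
       (nbhdMatrix G).mulVec p = chi (A₁ ∪ A₂) + 1)) ∧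
    HO (starMatrix G A₁ A₂) A₁ ∧ HO (starMatrix G A₁ A₂) A₂ ∧
    nullityM (starMatrix G A₁ A₂) = nullityM (nbhdMatrix G) + 2 := by
  obtain ⟨q₁, hq₁⟩ := h1.1
  obtain ⟨q₂, hq₂⟩ := h2.1
  have hM := nbhdMatrix_isSymm G
  have hpair := isHyperbolicPair_of_NO G hq₁ hq₂ h1 h2 h3
  have hstar : starMatrix G A₁ A₂ =
      toggle (nbhdMatrix G) (nbhdMatrix G *ᵥ q₁) (nbhdMatrix G *ᵥ q₂) := by
    rw [hq₁, hq₂]; rfl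
  have hone₁ : q₁ ⬝ᵥ 1 = 0 := by rw [← dotProduct_nbhdMatrix_mulVec_self, hpair.left]
  have hone₂ : q₂ ⬝ᵥ 1 = 0 := by rw [← dotProduct_nbhdMatrix_mulVec_self, hpair.right]
  refine ⟨fun p => ?_, ?_, ?_, ?_⟩
  · rw [hstar, toggle_mulVec_eq_iff hM hpair hone₁ hone₂, hq₁, hq₂, chi_union_of_disjoint hd]
    simp only [ZMod.exists_two, zero_smul, one_smul, add_zero]
    rw [add_comm 1 (chi A₁), add_comm 1 (chi A₂), add_right_comm (chi A₁) 1 (chi A₂)]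
    tauto
  · rw [HO, Solv, hstar, ← hq₁]
    exact not_exists_toggle_mulVec_eq_left hM hpair
  · rw [HO, Solv, hstar, ← hq₂]
    exact not_exists_toggle_mulVec_eq_right hM hpair
  · rw [hstar]
    exact finrank_ker_toggle hM hpair
end
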